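/- arXiv:2406.14499 — 7 statements merged into one kernel-verified Lean document; each statement's English description precedes it below -/
import Mathlib

section
/- Let L be a nondegenerate integral lattice, G a finite group acting on L by isometries such that the induced action on the discriminant group A_L = L^∨/L is trivial. Then G acts trivially on the discriminant group of the covariant lattice S_G(L) (the orthogonal complement in L of the fixed sublattice L^G). -/
lemma stmt0_aux_clear {V : Type*} [AddCommGroup V] [Module ℚ V]
    (M : Submodule ℤ V) (v : V) (hv : v ∈ Submodule.span ℚ (M : Set V)) :
    ∃ n : ℤ, n ≠ 0 ∧ n • v ∈ M := by
  induction hv using Submodule.span_induction with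
  | mem x hx => exact ⟨1, one_ne_zero, by simpa using hx⟩
  | zero => exact ⟨1, one_ne_zero, by simp⟩
  | add x y _ _ hx hy =>
      obtain ⟨n, hn, hnx⟩ := hx
      obtain ⟨m, hm, hmy⟩ := hy
      refine ⟨n * m, mul_ne_zero hn hm, ?_⟩
      rw [smul_add]
      exact M.add_mem (by rw [mul_comm, mul_smul]; exact M.smul_mem m hnx)
        (by rw [mul_smul]; exact M.smul_mem n hmy)
  | smul q x _ hx =>
      obtain ⟨n, hn, hnx⟩ := hx
      refine ⟨(q.den : ℤ) * n, mul_ne_zero (by exact_mod_cast q.den_nz) hn, ?_⟩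
      have key : ((q.den : ℤ) * n) • (q • x) = q.num • (n • x) := by
        rw [← Int.cast_smul_eq_zsmul ℚ, ← Int.cast_smul_eq_zsmul ℚ q.num,
          ← Int.cast_smul_eq_zsmul ℚ n, smul_smul, smul_smul]
        congr 1
        push_cast
        rw [mul_assoc, mul_comm (n : ℚ) q, ← mul_assoc]
        congr 1
        rw [mul_comm]
        exact_mod_cast Rat.mul_den_eq_num q
      rw [key]
      exact M.smul_mem _ hnx


/-- Let `L` be a nondegenerate integral lattice (a full `ℤ`-lattice in a
finite-dimensional `ℚ`-vector space `V` with a nondegenerate symmetric bilinear form `B`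
that is `ℤ`-valued on `L`), and `G` a finite group acting on `L` by isometries, such that
the induced action on the discriminant group `A_L = L^∨/L` is trivial (i.e. `g x - x ∈ L`
for every `x ∈ L^∨`).  Then `G` acts trivially on the discriminant group of the covariant
lattice `S_G(L)`, the orthogonal complement in `L` of the invariant sublattice `L^G`:
for every `x` in the dual of `S_G(L)` (taken inside the `ℚ`-span of `S_G(L)`),
`g x - x ∈ S_G(L)`. -/
theorem stmt_0
    {V : Type*} [AddCommGroup V] [Module ℚ V] [FiniteDimensional ℚ V]
    (B : LinearMap.BilinForm ℚ V)
    (hsymm : ∀ x y : V, B x y = B y x)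
    (hnd : B.Nondegenerate)
    (L : Submodule ℤ V)
    (hspan : Submodule.span ℚ (L : Set V) = ⊤)
    (hint : ∀ x ∈ L, ∀ y ∈ L, ∃ n : ℤ, B x y = (n : ℚ))
    {G : Type*} [Group G] [Finite G]
    (ρ : G →* (V ≃ₗ[ℚ] V))
    (hisom : ∀ (g : G) (x y : V), B (ρ g x) (ρ g y) = B x y)
    (hpres : ∀ (g : G), ∀ x ∈ L, ρ g x ∈ L)
    (htriv : ∀ (g : G) (x : V), (∀ y ∈ L, ∃ n : ℤ, B x y = (n : ℚ)) → ρ g x - x ∈ L) :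
    ∀ (g : G) (x : V),
      x ∈ Submodule.span ℚ {z : V | z ∈ L ∧ ∀ y ∈ L, (∀ h : G, ρ h y = y) → B z y = 0} →
      (∀ y : V, (y ∈ L ∧ ∀ y' ∈ L, (∀ h : G, ρ h y' = y') → B y y' = 0) →
        ∃ n : ℤ, B x y = (n : ℚ)) →
      ρ g x - x ∈ {z : V | z ∈ L ∧ ∀ y ∈ L, (∀ h : G, ρ h y = y) → B z y = 0} := by
  classical
  intro g x _hxspan hxint
  set SSet : Set V := {z : V | z ∈ L ∧ ∀ y ∈ L, (∀ h : G, ρ h y = y) → B z y = 0} with hSSet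
  -- basic facts about the action
  have hcomp : ∀ (h : G) (v : V), ρ h (ρ h⁻¹ v) = v := by
    intro h v
    have : ρ h * ρ h⁻¹ = 1 := by rw [← map_mul, mul_inv_cancel, map_one]
    calc ρ h (ρ h⁻¹ v) = (ρ h * ρ h⁻¹) v := rfl
      _ = v := by rw [this]; rfl
  have hBmove : ∀ (h : G) (u v : V), B (ρ h u) v = B u (ρ h⁻¹ v) := by
    intro h u v
    conv_lhs => rw [← hcomp h v]
    exact hisom h u (ρ h⁻¹ v)
  -- the covariant lattice as a ℤ-submodule
  have hSzsmul : ∀ (c : ℤ) (z : V), z ∈ SSet → c • z ∈ SSet := by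
    intro c z hz
    refine ⟨L.smul_mem c hz.1, fun y hy hfix => ?_⟩
    rw [map_zsmul, LinearMap.smul_apply, hz.2 y hy hfix, smul_zero]
  let Sz : Submodule ℤ V :=
    { carrier := SSet
      add_mem' := fun {z₁ z₂} h1 h2 => ⟨L.add_mem h1.1 h2.1, fun y hy hfix => by
        rw [map_add, LinearMap.add_apply, h1.2 y hy hfix, h2.2 y hy hfix, add_zero]⟩
      zero_mem' := ⟨L.zero_mem, fun y hy _ => by simp⟩
      smul_mem' := fun c {z} hz => hSzsmul c z hz }
  -- averaging
  have : Fintype G := Fintype.ofFinite G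
  set N : ℕ := Fintype.card G with hNdef
  have hNQ : (N : ℚ) ≠ 0 := Nat.cast_ne_zero.mpr Fintype.card_ne_zero
  have claim1 : ∀ l ∈ L, ((N : ℤ) • l - ∑ h : G, ρ h l) ∈ SSet := by
    intro l hl
    constructor
    · exact L.sub_mem (L.smul_mem _ hl) (Submodule.sum_mem L fun h _ => hpres h l hl)
    · intro y hy hfix
      rw [map_sub, LinearMap.sub_apply, map_zsmul, LinearMap.smul_apply,
        map_sum, LinearMap.sum_apply]
      have : ∀ h : G, B (ρ h l) y = B l y := by
        intro h
        rw [hBmove h l y, hfix h⁻¹]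
      rw [Finset.sum_congr rfl (fun h _ => this h), Finset.sum_const]
      simp [hNdef]
  have claim2 : ∀ (h : G), ∀ l ∈ L, ρ h l - l ∈ Submodule.span ℚ SSet := by
    intro h l hl
    have hsum : (∑ g' : G, ρ g' (ρ h l)) = ∑ g' : G, ρ g' l := by
      refine Fintype.sum_equiv (Equiv.mulRight h) _ _ (fun k => ?_)
      show ρ k (ρ h l) = ρ (k * h) l
      rw [map_mul]; rfl
    have e1 : ((N : ℤ) • l - ∑ g' : G, ρ g' l) ∈ Submodule.span ℚ SSet :=
      Submodule.subset_span (claim1 l hl)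
    have e2 : ((N : ℤ) • (ρ h l) - ∑ g' : G, ρ g' (ρ h l)) ∈ Submodule.span ℚ SSet :=
      Submodule.subset_span (claim1 (ρ h l) (hpres h l hl))
    have key : ρ h l - l = (N : ℚ)⁻¹ •
        (((N : ℤ) • (ρ h l) - ∑ g' : G, ρ g' (ρ h l)) - ((N : ℤ) • l - ∑ g' : G, ρ g' l)) := by
      rw [hsum]
      have : ((N : ℤ) • (ρ h l) - ∑ g' : G, ρ g' l) - ((N : ℤ) • l - ∑ g' : G, ρ g' l)
          = (N : ℤ) • (ρ h l - l) := by
        rw [smul_sub]; abel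
      rw [this, ← Int.cast_smul_eq_zsmul ℚ, smul_smul]
      push_cast
      rw [inv_mul_cancel₀ hNQ, one_smul]
    rw [key]
    exact Submodule.smul_mem _ _ (Submodule.sub_mem _ e2 e1)
  -- a basis of V inside L
  obtain ⟨s, hsub, hsp, hli⟩ := exists_linearIndependent ℚ (L : Set V)
  have hsfin : s.Finite := hli.setFinite
  have : Fintype s := hsfin.fintype
  have hstop : ⊤ ≤ Submodule.span ℚ (Set.range ((↑) : s → V)) := by
    rw [Subtype.range_coe, hsp, hspan]
  let b : Module.Basis s ℚ V := Module.Basis.mk hli hstop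
  have hb : ∀ i : s, b i = (i : V) := fun i => Module.Basis.mk_apply hli hstop i
  -- L is a finitely generated ℤ-module
  let ψ : V →ₗ[ℚ] (s → ℚ) := LinearMap.pi (fun i => B.flip (i : V))
  have hψapp : ∀ (v : V) (i : s), ψ v i = B v (i : V) := fun v i => rfl
  have hψinj : Function.Injective ψ := by
    intro u v huv
    have h0 : ∀ i : s, B (u - v) (i : V) = 0 := by
      intro i
      have := congrFun huv i
      rw [hψapp, hψapp] at this
      rw [map_sub, LinearMap.sub_apply, this, sub_self]
    have hker : ∀ w : V, B (u - v) w = 0 := by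
      intro w
      have hw : w ∈ Submodule.span ℚ s := by rw [hsp, hspan]; trivial
      have hle : Submodule.span ℚ s ≤ LinearMap.ker (B (u - v)) := by
        rw [Submodule.span_le]
        intro z hz
        exact h0 ⟨z, hz⟩
      exact hle hw
    have := hnd.1 (u - v) hker
    rwa [sub_eq_zero] at this
  let P : Submodule ℤ (s → ℚ) := Submodule.span ℤ (Set.range fun i : s => Pi.single i (1 : ℚ))
  have hmemP : ∀ l : L, ψ (l : V) ∈ P := by
    intro l
    have hch : ∀ i : s, ∃ n : ℤ, B (l : V) (i : V) = (n : ℚ) :=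
      fun i => hint (l : V) l.2 (i : V) (hsub i.2)
    choose nf hnf using hch
    have : ψ (l : V) = ∑ i : s, nf i • Pi.single i (1 : ℚ) := by
      funext j
      rw [hψapp, hnf j, Finset.sum_apply]
      simp [Pi.single_apply]
    rw [this]
    exact Submodule.sum_mem P fun i _ =>
      Submodule.smul_mem P _ (Submodule.subset_span ⟨i, rfl⟩)
  have hPfin : Module.Finite ℤ P := Module.Finite.span_of_finite ℤ (Set.finite_range _)
  have hPnoeth : IsNoetherian ℤ P := isNoetherian_of_isNoetherianRing_of_finite ℤ P
  let e : L →ₗ[ℤ] P :=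
    LinearMap.codRestrict P ((ψ.restrictScalars ℤ).comp L.subtype) hmemP
  have heinj : Function.Injective e := by
    intro u v huv
    have : ψ (u : V) = ψ (v : V) := congrArg Subtype.val huv
    exact Subtype.ext (hψinj this)
  have hLnoeth : IsNoetherian ℤ L := isNoetherian_of_injective e heinj
  have hLfin : Module.Finite ℤ L := ⟨IsNoetherian.noetherian ⊤⟩
  -- quotient by the covariant part and splitting
  let Ncap : Submodule ℤ L := Sz.comap L.subtype
  have hQfin : Module.Finite ℤ (L ⧸ Ncap) :=
    Module.Finite.of_surjective Ncap.mkQ (Submodule.mkQ_surjective Ncap)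
  have hQtf : NoZeroSMulDivisors ℤ (L ⧸ Ncap) := by
    refine ⟨fun {c q} hcq => ?_⟩
    by_cases hc : c = 0
    · exact Or.inl hc
    · refine Or.inr ?_
      obtain ⟨l, rfl⟩ := Submodule.mkQ_surjective Ncap q
      rw [← map_smul] at hcq
      have hclN : c • l ∈ Ncap := by
        rwa [Submodule.mkQ_apply, Submodule.Quotient.mk_eq_zero] at hcq
      have hcl : (c • (l : V)) ∈ SSet := by
        have := hclN
        exact this
      have hlS : (l : V) ∈ SSet := by
        refine ⟨l.2, fun y hy hfix => ?_⟩
        have := hcl.2 y hy hfix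
        rw [map_zsmul, LinearMap.smul_apply, smul_eq_zero] at this
        rcases this with h | h
        · exact absurd h hc
        · exact h
      rw [Submodule.mkQ_apply, Submodule.Quotient.mk_eq_zero]
      exact hlS
  have hQfree : Module.Free ℤ (L ⧸ Ncap) := Module.free_of_finite_type_torsion_free'
  obtain ⟨sec, hsec⟩ := Module.projective_lifting_property Ncap.mkQ LinearMap.id
    (Submodule.mkQ_surjective Ncap)
  let π : L →ₗ[ℤ] L := LinearMap.id - sec.comp Ncap.mkQ
  have hπmem : ∀ l : L, ((π l : L) : V) ∈ SSet := by
    intro l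
    have : π l ∈ Ncap := by
      rw [← Submodule.ker_mkQ Ncap, LinearMap.mem_ker]
      show Ncap.mkQ (l - sec (Ncap.mkQ l)) = 0
      rw [map_sub]
      have : Ncap.mkQ (sec (Ncap.mkQ l)) = Ncap.mkQ l := by
        have := congrFun (congrArg DFunLike.coe hsec) (Ncap.mkQ l)
        simpa using this
      rw [this, sub_self]
    exact this
  have hπfix : ∀ l : L, ((l : L) : V) ∈ SSet → π l = l := by
    intro l hl
    have hmem : l ∈ Ncap := hl
    have : Ncap.mkQ l = 0 := by rwa [← LinearMap.mem_ker, Submodule.ker_mkQ]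
    show LinearMap.id l - sec (Ncap.mkQ l) = l
    rw [this, map_zero]
    simp
  -- the dual functional and the extension x'
  let f : L →ₗ[ℤ] ℚ := ((B x).restrictScalars ℤ).comp (L.subtype.comp π)
  have hf : ∀ l : L, f l = B x ((π l : L) : V) := fun l => rfl
  let Fq : V →ₗ[ℚ] ℚ := b.constr ℕ (fun i => f ⟨(i : V), hsub i.2⟩)
  let x' : V := (B.toDual hnd).symm Fq
  have hx'app : ∀ v : V, B x' v = Fq v := fun v =>
    LinearMap.BilinForm.apply_toDual_symm_apply Fq v
  -- B x' agrees with f on L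
  have htop2 : Submodule.span ℚ ((Submodule.span ℤ s : Submodule ℤ V) : Set V) = ⊤ := by
    rw [eq_top_iff, ← hspan, ← hsp]
    exact Submodule.span_mono Submodule.subset_span
  have hspanZ : ∀ l : L, ∃ n : ℤ, n ≠ 0 ∧ n • (l : V) ∈ Submodule.span ℤ s := by
    intro l
    exact stmt0_aux_clear (Submodule.span ℤ s) (l : V) (by rw [htop2]; trivial)
  have hagree0 : ∀ v ∈ Submodule.span ℤ s, ∀ h : v ∈ L, B x' v = f ⟨v, h⟩ := by
    intro v hv
    induction hv using Submodule.span_induction with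
    | mem z hz =>
        intro hL
        have hbz : B x' z = Fq z := hx'app z
        have hcb := b.constr_basis ℕ (fun i => f ⟨(i : V), hsub i.2⟩) ⟨z, hz⟩
        rw [hb ⟨z, hz⟩] at hcb
        rw [hbz, hcb]
    | zero =>
        intro hL
        have h0 : (⟨(0 : V), hL⟩ : L) = 0 := Subtype.ext rfl
        rw [h0, map_zero, map_zero]
    | add u v hu hv ihu ihv =>
        intro hL
        have huL : u ∈ L := Submodule.span_le.mpr hsub hu
        have hvL : v ∈ L := Submodule.span_le.mpr hsub hv
        have hadd : (⟨u + v, hL⟩ : L) = ⟨u, huL⟩ + ⟨v, hvL⟩ := Subtype.ext rfl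
        simp only [hadd, map_add]
        rw [ihu huL, ihv hvL]
    | smul c u hu ihu =>
        intro hL
        have huL : u ∈ L := Submodule.span_le.mpr hsub hu
        have hsm : (⟨c • u, hL⟩ : L) = c • (⟨u, huL⟩ : L) := Subtype.ext rfl
        rw [map_zsmul (B x') c u, ihu huL, hsm, map_smul]
  have hagree : ∀ l : L, B x' (l : V) = f l := by
    intro l
    obtain ⟨n, hn, hnl⟩ := hspanZ l
    have hmemL : n • (l : V) ∈ L := L.smul_mem n l.2
    have h1 : B x' (n • (l : V)) = f ⟨n • (l : V), hmemL⟩ := hagree0 _ hnl hmemL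
    have h2 : (⟨n • (l : V), hmemL⟩ : L) = n • l := Subtype.ext rfl
    rw [map_zsmul (B x') n (l : V), h2, map_smul f n l] at h1
    exact smul_right_injective ℚ hn h1
  have hx'int : ∀ y ∈ L, ∃ n : ℤ, B x' y = (n : ℚ) := by
    intro y hy
    have := hagree ⟨y, hy⟩
    rw [this, hf]
    exact hxint _ ⟨(hπmem ⟨y, hy⟩).1, (hπmem ⟨y, hy⟩).2⟩
  -- w := x' - x is orthogonal to span SSet and G-invariant
  set w : V := x' - x with hw
  have hwperp : ∀ v ∈ Submodule.span ℚ SSet, B w v = 0 := by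
    intro v hv
    have hle : Submodule.span ℚ SSet ≤ LinearMap.ker (B w) := by
      rw [Submodule.span_le]
      intro t ht
      show B w t = 0
      have htL : t ∈ L := ht.1
      have h1 : B x' t = B x t := by
        have := hagree ⟨t, htL⟩
        rw [this, hf, hπfix ⟨t, htL⟩ ht]
      rw [hw, map_sub, LinearMap.sub_apply, h1, sub_self]
    exact hle hv
  have hwfix : ∀ h : G, ρ h w = w := by
    intro h
    have key : ∀ v : V, B (ρ h w - w) v = 0 := by
      intro v
      have hv : v ∈ Submodule.span ℚ (L : Set V) := by rw [hspan]; trivial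
      have hle : Submodule.span ℚ (L : Set V) ≤ LinearMap.ker (B (ρ h w - w)) := by
        rw [Submodule.span_le]
        intro l hl
        show B (ρ h w - w) l = 0
        rw [map_sub, LinearMap.sub_apply, hBmove h w l]
        have h1 := (map_sub (B w) (ρ h⁻¹ l) l).symm
        rw [h1, hwperp _ (claim2 h⁻¹ l hl)]
      exact hle hv
    have := hnd.1 _ key
    rwa [sub_eq_zero] at this
  -- conclusion
  have hx'w : x' = x + w := by rw [hw]; abel
  have hLmem : ρ g x - x ∈ L := by
    have h1 := htriv g x' hx'int
    have h2 : ρ g x' - x' = ρ g x - x := by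
      rw [hx'w, map_add, hwfix g]
      abel
    rwa [h2] at h1
  refine ⟨hLmem, fun y hy hfix => ?_⟩
  rw [map_sub, LinearMap.sub_apply, hBmove g x y, hfix g⁻¹, sub_self]
end

section
/- Let S be a negative definite integral lattice on which a finite group G acts faithfully without nonzero fixed vectors, such that G acts trivially on the discriminant group A_S. If gcd(|G|, p) = 1 for a prime p, then the p-primary part of A_S is trivial; equivalently, for every x ∈ S^∨, |G|·x ∈ S implies the order of [x] in A_S is coprime to p. -/
/-- Any vector in the `ℚ`-span of a `ℤ`-submodule has a nonzero integer multiple in it. -/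
lemma denom_clear {V : Type*} [AddCommGroup V] [Module ℚ V] (S : Submodule ℤ V)
    (hspan : Submodule.span ℚ (S : Set V) = ⊤) (v : V) :
    ∃ n : ℤ, n ≠ 0 ∧ n • v ∈ S := by
  let W : Submodule ℚ V :=
    { carrier := {v | ∃ n : ℤ, n ≠ 0 ∧ n • v ∈ S}
      zero_mem' := ⟨1, one_ne_zero, by simp⟩
      add_mem' := by
        rintro a b ⟨m, hm, hma⟩ ⟨n, hn, hnb⟩
        refine ⟨m * n, mul_ne_zero hm hn, ?_⟩
        have : (m * n) • (a + b) = n • (m • a) + m • (n • b) := by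
          module
        rw [this]
        exact add_mem (Submodule.smul_mem _ _ hma) (Submodule.smul_mem _ _ hnb)
      smul_mem' := by
        rintro c v ⟨n, hn, hnv⟩
        refine ⟨(c.den : ℤ) * n, mul_ne_zero (by exact_mod_cast c.den_ne_zero) hn, ?_⟩
        have hq : ∀ (k : ℤ) (w : V), k • w = (k : ℚ) • w :=
          fun k w => (Int.cast_smul_eq_zsmul ℚ k w).symm
        have : ((c.den : ℤ) * n) • (c • v) = c.num • (n • v) := by
          rw [hq, hq, hq, smul_smul, smul_smul]
          congr 1
          push_cast
          rw [mul_comm ((c.den : ℚ) * n) c, ← mul_assoc, Rat.mul_den_eq_num]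
        rw [this]
        exact Submodule.smul_mem _ _ hnv }
  have hSW : (S : Set V) ⊆ (W : Set V) := fun s hs => ⟨1, one_ne_zero, by simpa using hs⟩
  have : v ∈ W := by
    have := Submodule.span_le.mpr hSW
    rw [hspan] at this
    exact this Submodule.mem_top
  exact this

/-- Let `S` be a negative definite integral lattice (a full `ℤ`-lattice in
a finite-dimensional `ℚ`-vector space with a symmetric negative definite bilinear form `B`,
`ℤ`-valued on `S`) on which a finite group `G` acts faithfully by isometries without nonzero
fixed vectors, such that `G` acts trivially on the discriminant group `A_S = S^∨/S`.
If `gcd(|G|, p) = 1` for a prime `p`, then the `p`-primary part of `A_S` is trivial: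
for every `x ∈ S^∨` we have `|G| • x ∈ S`, and the order of the class `[x]` in `A_S` is
coprime to `p` (there is `n > 0` coprime to `p` with `n • x ∈ S`). -/
theorem stmt_1
    {V : Type*} [AddCommGroup V] [Module ℚ V] [FiniteDimensional ℚ V]
    (B : LinearMap.BilinForm ℚ V)
    (hsymm : ∀ x y : V, B x y = B y x)
    (hneg : ∀ x : V, x ≠ 0 → B x x < 0)
    (S : Submodule ℤ V)
    (hspan : Submodule.span ℚ (S : Set V) = ⊤)
    (hint : ∀ x ∈ S, ∀ y ∈ S, ∃ n : ℤ, B x y = (n : ℚ))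
    {G : Type*} [Group G] [Finite G]
    (ρ : G →* (V ≃ₗ[ℚ] V))
    (hisom : ∀ (g : G) (x y : V), B (ρ g x) (ρ g y) = B x y)
    (hpres : ∀ (g : G), ∀ x ∈ S, ρ g x ∈ S)
    (hfaith : ∀ g : G, (∀ x ∈ S, ρ g x = x) → g = 1)
    (hnofix : ∀ x ∈ S, (∀ g : G, ρ g x = x) → x = 0)
    (htriv : ∀ (g : G) (x : V), (∀ y ∈ S, ∃ n : ℤ, B x y = (n : ℚ)) → ρ g x - x ∈ S)
    (p : ℕ) (hp : p.Prime) (hcop : ¬ p ∣ Nat.card G) :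
    ∀ x : V, (∀ y ∈ S, ∃ n : ℤ, B x y = (n : ℚ)) →
      (Nat.card G) • x ∈ S ∧ ∃ n : ℕ, 0 < n ∧ Nat.Coprime n p ∧ n • x ∈ S := by
  intro x hx
  have := Fintype.ofFinite G
  -- invariant vectors in V are zero
  have hVfix : ∀ v : V, (∀ g : G, ρ g v = v) → v = 0 := by
    intro v hv
    obtain ⟨n, hn, hnv⟩ := denom_clear S hspan v
    have hnv0 : n • v = 0 := by
      apply hnofix _ hnv
      intro g
      rw [map_zsmul, hv g]
    have : (n : ℚ) • v = 0 := by rw [Int.cast_smul_eq_zsmul]; exact hnv0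
    rcases smul_eq_zero.mp this with h | h
    · exact absurd (by exact_mod_cast h) hn
    · exact h
  set s : V := ∑ g : G, ρ g x with hs
  have hsinv : ∀ h : G, ρ h s = s := by
    intro h
    rw [hs, map_sum]
    exact Fintype.sum_equiv (Equiv.mulLeft h) _ _ (fun g => by
      simp only [Equiv.coe_mulLeft, map_mul]
      rfl)
  have hs0 : s = 0 := hVfix s hsinv
  have hmem : s - (Nat.card G) • x ∈ S := by
    have : s - (Nat.card G) • x = ∑ g : G, (ρ g x - x) := by
      rw [Finset.sum_sub_distrib, ← hs, Finset.sum_const, Nat.card_eq_fintype_card]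
      simp
    rw [this]
    exact Submodule.sum_mem _ fun g _ => htriv g x hx
  have hGx : (Nat.card G) • x ∈ S := by
    have : (Nat.card G) • x = -(s - (Nat.card G) • x) := by rw [hs0, zero_sub, neg_neg]
    rw [this]
    exact Submodule.neg_mem _ hmem
  refine ⟨hGx, Nat.card G, Nat.card_pos, ?_, hGx⟩
  exact (hp.coprime_iff_not_dvd.mpr hcop).symm
end

section
/- Realize the root lattice A_m inside Z^{m+1} as the set of vectors with coordinate sum zero, with Weyl group W(A_m) = S_{m+1} permuting the standard basis v_1,…,v_{m+1}. Let p be an odd prime and H ≤ S_{m+1} a subgroup such that the sublattice R^# of A_m generated by p·A_m and all vectors gα − α (g ∈ H, α ∈ A_m) contains no roots (vectors of squared length 2). Then every element of H of prime order has order p. In particular H is a p-group. -/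
/-- Realize the root lattice `A_m` inside `ℤ^{m+1}` as the vectors with
coordinate sum zero, with Weyl group `S_{m+1}` permuting the coordinates.  Let `p` be an
odd prime and `H ≤ S_{m+1}` a subgroup such that the sublattice `R^#` generated by
`p·A_m` and all vectors `gα − α` (`g ∈ H`, `α ∈ A_m`) contains no roots (vectors of squared
length `2`).  Then every element of `H` of prime order has order `p`; in particular `H`
is a `p`-group. -/
theorem stmt_3 (p : ℕ) (hp : p.Prime) (hodd : Odd p) (m : ℕ)
    (H : Subgroup (Equiv.Perm (Fin (m + 1))))
    (hroot : ∀ x ∈ Submodule.span ℤ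
      {x : Fin (m + 1) → ℤ |
        (∃ a : Fin (m + 1) → ℤ, (∑ i, a i = 0) ∧ x = (p : ℤ) • a) ∨
        (∃ g ∈ H, ∃ a : Fin (m + 1) → ℤ, (∑ i, a i = 0) ∧
          x = (fun i => a (g⁻¹ i)) - a)},
      (∑ i, x i * x i) ≠ 2) :
    (∀ g ∈ H, ∀ q : ℕ, q.Prime → orderOf g = q → q = p) ∧ IsPGroup p H := by
  set S : Set (Fin (m + 1) → ℤ) :=
    {x : Fin (m + 1) → ℤ |
        (∃ a : Fin (m + 1) → ℤ, (∑ i, a i = 0) ∧ x = (p : ℤ) • a) ∨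
        (∃ g ∈ H, ∃ a : Fin (m + 1) → ℤ, (∑ i, a i = 0) ∧
          x = (fun i => a (g⁻¹ i)) - a)} with hS
  have key : ∀ g ∈ H, ∀ q : ℕ, q.Prime → orderOf g = q → q = p := by
    intro g hg q hq hord
    by_contra hqp
    have hg1 : g ≠ 1 := by
      intro h
      rw [h, orderOf_one] at hord
      exact hq.one_lt.ne (hord ▸ rfl)
    obtain ⟨i, hi⟩ : ∃ i, g i ≠ i := by
      by_contra h; push_neg at h
      exact hg1 (Equiv.ext h)
    set α : Fin (m + 1) → ℤ :=
      fun j => (if j = i then 1 else 0) - (if j = g i then 1 else 0) with hα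
    have hsum : ∑ j, α j = 0 := by
      simp [hα, Finset.sum_sub_distrib]
    -- p • α ∈ span
    have hpα : (p : ℤ) • α ∈ Submodule.span ℤ S :=
      Submodule.subset_span (Or.inl ⟨α, hsum, rfl⟩)
    -- q • α ∈ span via telescoping
    have hβ : ∀ k : ℕ, ((fun j => α ((g ^ k)⁻¹ j)) - α) ∈ Submodule.span ℤ S :=
      fun k => Submodule.subset_span (Or.inr ⟨g ^ k, pow_mem hg k, α, hsum, rfl⟩)
    have htel : ∑ k ∈ Finset.range q, ((fun j => α ((g ^ k)⁻¹ j)) - α)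
        = (-(q : ℤ)) • α := by
      funext j
      have hgq : g ^ q = 1 := by rw [← hord]; exact pow_orderOf_eq_one g
      have hterm : ∀ k : ℕ, α ((g ^ k)⁻¹ j) =
          (if j = (g ^ k) i then (1 : ℤ) else 0) -
            (if j = (g ^ (k + 1)) i then 1 else 0) := by
        intro k
        have h1 : ((g ^ k)⁻¹ j = i) ↔ (j = (g ^ k) i) := by
          constructor
          · intro h; rw [← h]; simp
          · intro h; rw [h]; simp
        have hstep : (g ^ (k + 1)) i = (g ^ k) (g i) := by
          rw [pow_succ]; rfl
        have h2 : ((g ^ k)⁻¹ j = g i) ↔ (j = (g ^ (k + 1)) i) := by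
          rw [hstep]
          constructor
          · intro h; rw [← h]; simp
          · intro h; rw [h]; simp
        simp only [hα, h1, h2]
      have : ∑ k ∈ Finset.range q, α ((g ^ k)⁻¹ j) = 0 := by
        have := Finset.sum_range_sub'
          (fun k => (if j = (g ^ k) i then (1 : ℤ) else 0)) q
        simp only [hterm]
        rw [this, hgq, pow_zero]
        simp
      simp only [Finset.sum_apply, Pi.sub_apply, Finset.sum_sub_distrib, this,
        Finset.sum_const, Finset.card_range, Pi.smul_apply, smul_eq_mul]
      ring
    have hqα : (q : ℤ) • α ∈ Submodule.span ℤ S := by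
      have hmem : (-(q : ℤ)) • α ∈ Submodule.span ℤ S := by
        rw [← htel]
        exact Submodule.sum_mem _ fun k _ => hβ k
      have := Submodule.neg_mem _ hmem
      rwa [neg_smul, neg_neg] at this
    -- coprimality to get α itself in span
    have hcop : IsCoprime (p : ℤ) (q : ℤ) := by
      rw [Int.isCoprime_iff_gcd_eq_one]
      exact_mod_cast (Nat.coprime_primes hp hq).mpr (fun h => hqp h.symm)
    obtain ⟨a, b, hab⟩ := hcop
    have hαmem : α ∈ Submodule.span ℤ S := by
      have h1 : (a * (p : ℤ) + b * (q : ℤ)) • α ∈ Submodule.span ℤ S := by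
        rw [add_smul, mul_smul, mul_smul]
        exact Submodule.add_mem _ (Submodule.smul_mem _ a hpα)
          (Submodule.smul_mem _ b hqα)
      rwa [hab, one_smul] at h1
    -- but α has norm 2
    have hnorm : ∑ j, α j * α j = 2 := by
      have hcase : ∀ j, α j * α j =
          (if j = i then (1 : ℤ) else 0) + (if j = g i then 1 else 0) := by
        intro j
        by_cases h1 : j = i <;> by_cases h2 : j = g i
        · exact absurd (h1 ▸ h2 : i = g i) (fun h => hi h.symm)
        · simp [hα, h1, h2, hi, Ne.symm hi]
        · simp [hα, h1, h2, hi, Ne.symm hi]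
        · simp [hα, h1, h2]
      simp [hcase, Finset.sum_add_distrib]
    exact hroot α hαmem hnorm
  refine ⟨key, ?_⟩
  haveI : Fact p.Prime := ⟨hp⟩
  rw [IsPGroup.iff_orderOf]
  intro g
  have hn0 : orderOf g ≠ 0 := (orderOf_pos g).ne'
  set n := orderOf g with hn
  have hcoe : orderOf (g : Equiv.Perm (Fin (m + 1))) = n := Subgroup.orderOf_coe g
  have hall : ∀ {d : ℕ}, d.Prime → d ∣ n → d = p := by
    intro d hd hdvd
    have hnd : n / d ∣ n := ⟨d, (Nat.div_mul_cancel hdvd).symm⟩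
    have hordh : orderOf ((g : Equiv.Perm (Fin (m + 1))) ^ (n / d)) = d := by
      rw [orderOf_pow, hcoe, Nat.gcd_eq_right hnd, Nat.div_div_self hdvd hn0]
    exact key _ (pow_mem g.2 (n / d)) d hd hordh
  exact ⟨n.primeFactorsList.length,
    Nat.eq_prime_pow_of_unique_prime_dvd hn0 hall⟩
end

section
/- With A_m ⊂ Z^{m+1} and W(A_m) = S_{m+1} as above, let p be an odd prime and H ≤ S_{m+1} such that the sublattice generated by p·A_m and {gα − α : g ∈ H, α ∈ A_m} contains no roots. Then every nontrivial element of H acts on {v_1,…,v_{m+1}} without fixed points. Consequently, if H is nontrivial then p divides m+1. -/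
def ee {n : ℕ} (i : Fin n) : Fin n → ℤ := Pi.single i 1

lemma ee_apply {n : ℕ} (i j : Fin n) : ee i j = if j = i then 1 else 0 :=
  Pi.single_apply i 1 j

lemma single_comp {n : ℕ} (g : Equiv.Perm (Fin n)) (i j : Fin n) :
    ee i (g⁻¹ j) = ee (g i) j := by
  simp [ee_apply, Equiv.Perm.inv_eq_iff_eq, Equiv.symm_apply_eq]

lemma sum_zero' {n : ℕ} (i k : Fin n) :
    ∑ j, (ee i - ee k) j = 0 := by
  simp [ee_apply, Finset.sum_sub_distrib]

lemma sumsq {n : ℕ} {i k : Fin n} (hik : i ≠ k) :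
    ∑ j, ((ee i - ee k) j * (ee i - ee k) j) = 2 := by
  have h : ∀ j, (ee i - ee k) j * (ee i - ee k) j = ee i j + ee k j := by
    intro j
    simp only [Pi.sub_apply, ee_apply]
    by_cases h1 : j = i <;> by_cases h2 : j = k <;> simp_all
  rw [Finset.sum_congr rfl (fun j _ => h j)]
  simp [ee_apply, Finset.sum_add_distrib]

/-- With `A_m ⊂ ℤ^{m+1}` (vectors of coordinate sum zero) and
`W(A_m) = S_{m+1}` permuting coordinates, let `p` be an odd prime and `H ≤ S_{m+1}` such
that the sublattice generated by `p·A_m` and `{gα − α : g ∈ H, α ∈ A_m}` contains no roots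
(vectors of squared length `2`).  Then every nontrivial element of `H` acts on the `m+1`
basis vectors without fixed points; consequently if `H` is nontrivial then `p ∣ m+1`. -/
theorem stmt_4 (p : ℕ) (hp : p.Prime) (hodd : Odd p) (m : ℕ)
    (H : Subgroup (Equiv.Perm (Fin (m + 1))))
    (hroot : ∀ x ∈ Submodule.span ℤ
      {x : Fin (m + 1) → ℤ |
        (∃ a : Fin (m + 1) → ℤ, (∑ i, a i = 0) ∧ x = (p : ℤ) • a) ∨
        (∃ g ∈ H, ∃ a : Fin (m + 1) → ℤ, (∑ i, a i = 0) ∧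
          x = (fun i => a (g⁻¹ i)) - a)},
      (∑ i, x i * x i) ≠ 2) :
    (∀ g ∈ H, g ≠ 1 → ∀ i : Fin (m + 1), g i ≠ i) ∧ (H ≠ ⊥ → p ∣ (m + 1)) := by
  set S : Set (Fin (m + 1) → ℤ) :=
      {x : Fin (m + 1) → ℤ |
        (∃ a : Fin (m + 1) → ℤ, (∑ i, a i = 0) ∧ x = (p : ℤ) • a) ∨
        (∃ g ∈ H, ∃ a : Fin (m + 1) → ℤ, (∑ i, a i = 0) ∧
          x = (fun i => a (g⁻¹ i)) - a)} with hS
  have key : ∀ g ∈ H, g ≠ 1 → ∀ i : Fin (m + 1), g i ≠ i := by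
    intro g hg hg1 i hfix
    obtain ⟨j, hj⟩ : ∃ j, g j ≠ j := by
      by_contra hc; push_neg at hc; exact hg1 (Equiv.ext hc)
    set a : Fin (m + 1) → ℤ := ee j - ee i with ha
    have hx : ((fun k => a (g⁻¹ k)) - a) ∈ Submodule.span ℤ S :=
      Submodule.subset_span (Or.inr ⟨g, hg, a, sum_zero' j i, rfl⟩)
    have heq : ((fun k => a (g⁻¹ k)) - a) = ee (g j) - ee j := by
      funext k
      simp only [Pi.sub_apply, ha, single_comp, hfix]
      ring
    have := hroot _ hx
    rw [heq] at this
    exact this (sumsq hj)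
  refine ⟨key, ?_⟩
  intro hbot
  obtain ⟨g, hgH, hg1⟩ : ∃ g ∈ H, g ≠ 1 := by
    by_contra hc; push_neg at hc
    exact hbot (Subgroup.eq_bot_iff_forall H |>.2 hc)
  set n := orderOf g with hn
  have hn1 : n ≠ 1 := fun h => hg1 (orderOf_eq_one_iff.1 h)
  have hn0 : n ≠ 0 := (orderOf_pos g).ne'
  set q := n.minFac with hq
  have hqp : q.Prime := Nat.minFac_prime hn1
  set h : Equiv.Perm (Fin (m + 1)) := g ^ (n / q) with hh
  have hhH : h ∈ H := H.pow_mem hgH _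
  have hoh : orderOf h = q := by
    rw [hh, orderOf_pow]
    rw [Nat.gcd_eq_right (Nat.div_dvd_of_dvd (Nat.minFac_dvd n))]
    exact Nat.div_div_self (Nat.minFac_dvd n) hn0
  have hh1 : h ≠ 1 := by
    intro hc
    rw [hc, orderOf_one] at hoh
    exact hqp.one_lt.ne hoh
  -- claim q = p
  have hqeq : q = p := by
    by_contra hne
    have hi : h 0 ≠ 0 := key h hhH hh1 0
    set a : Fin (m + 1) → ℤ := ee (0 : Fin (m+1)) - ee (h 0) with ha
    have hpa : (p : ℤ) • a ∈ Submodule.span ℤ S :=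
      Submodule.subset_span (Or.inl ⟨a, sum_zero' _ _, rfl⟩)
    -- telescoping for q • a
    have hterm : ∀ k : ℕ, (fun j => a ((h ^ k)⁻¹ j)) - a
        = (ee ((h ^ k) 0) - ee ((h ^ (k+1)) 0)) - a := by
      intro k
      funext j
      simp only [Pi.sub_apply, ha, single_comp]
      have : (h ^ k) (h 0) = (h ^ (k+1)) 0 := by
        rw [pow_succ, Equiv.Perm.mul_apply]
      rw [this]
    have hmem : ∀ k : ℕ, ((fun j => a ((h ^ k)⁻¹ j)) - a) ∈ Submodule.span ℤ S :=
      fun k => Submodule.subset_span (Or.inr ⟨h ^ k, H.pow_mem hhH k, a, sum_zero' _ _, rfl⟩)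
    have hsum : ∑ k ∈ Finset.range q, ((fun j => a ((h ^ k)⁻¹ j)) - a)
        = -(q : ℤ) • a := by
      have h1 : ∑ k ∈ Finset.range q, ((fun j => a ((h ^ k)⁻¹ j)) - a)
          = (∑ k ∈ Finset.range q, (ee ((h ^ k) 0) - ee ((h ^ (k+1)) 0))) - (q : ℤ) • a := by
        rw [Finset.sum_congr rfl (fun k _ => hterm k), Finset.sum_sub_distrib,
          Finset.sum_const, Finset.card_range]
        simp [Nat.cast_smul_eq_nsmul]
      rw [h1, Finset.sum_range_sub' (fun k => ee ((h ^ k) 0))]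
      have : (h ^ q) = 1 := by rw [← hoh, pow_orderOf_eq_one]
      simp [this]
    have hqa : (q : ℤ) • a ∈ Submodule.span ℤ S := by
      have : -(q : ℤ) • a ∈ Submodule.span ℤ S := by
        rw [← hsum]
        exact Submodule.sum_mem _ (fun k _ => hmem k)
      have h2 := Submodule.neg_mem _ this
      rwa [neg_smul, neg_neg] at h2
    have hcop : IsCoprime (q : ℤ) (p : ℤ) := by
      rw [Int.isCoprime_iff_gcd_eq_one]
      exact_mod_cast (Nat.coprime_primes hqp hp).2 hne
    obtain ⟨u, v, huv⟩ := hcop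
    have haS : a ∈ Submodule.span ℤ S := by
      have : a = u • ((q : ℤ) • a) + v • ((p : ℤ) • a) := by
        rw [smul_smul, smul_smul, ← add_smul, huv, one_smul]
      rw [this]
      exact Submodule.add_mem _ (Submodule.smul_mem _ _ hqa) (Submodule.smul_mem _ _ hpa)
    exact hroot a haS (sumsq hi.symm)
  -- now h has order p and no fixed points; p-group fixed point counting
  have hohp : orderOf h = p := hoh.trans hqeq
  have hPG : IsPGroup p (Subgroup.zpowers h) := by
    apply IsPGroup.of_card (n := 1)
    rw [Nat.card_zpowers, hohp, pow_one]
  haveI : Fact p.Prime := ⟨hp⟩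
  classical
  have hfix : MulAction.fixedPoints (Subgroup.zpowers h) (Fin (m + 1)) = ∅ := by
    ext i
    simp only [Set.mem_empty_iff_false, iff_false, MulAction.mem_fixedPoints]
    intro hc
    exact key h hhH hh1 i (hc ⟨h, Subgroup.mem_zpowers h⟩)
  have hmod := hPG.card_modEq_card_fixedPoints (Fin (m + 1))
  rw [Nat.card_eq_fintype_card, Fintype.card_fin] at hmod
  have h0 : Nat.card (MulAction.fixedPoints (Subgroup.zpowers h) (Fin (m + 1))) = 0 := by
    simp [hfix]
  rw [h0] at hmod
  exact (Nat.modEq_zero_iff_dvd).1 hmod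
end

section
/- Realize D_m ⊂ Z^m (m ≥ 4) as the integer vectors with even coordinate sum, with roots ±v_i ± v_j (i < j). Let p be an odd prime and g a signed permutation of Z^m (g(v_i) = ε_i v_{σ(i)} with σ ∈ S_m, ε_i ∈ {±1}) preserving D_m, such that the sublattice generated by p·D_m and {g^k α − α : k ∈ Z, α ∈ D_m} contains no roots. Then the underlying permutation σ is the identity, and at most one index i has ε_i = −1. -/
namespace Stmt6Aux

/-- vector with value `a` at `i`, `b` at `j`, `0` elsewhere -/
def v2 {m : ℕ} (i j : Fin m) (a b : ℤ) : Fin m → ℤ :=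
  fun l => if l = i then a else if l = j then b else 0

lemma v2_split {m : ℕ} (i j : Fin m) (hij : i ≠ j) (a b : ℤ) (l : Fin m) :
    v2 i j a b l = (if l = i then a else 0) + (if l = j then b else 0) := by
  unfold v2
  split_ifs with h1 h2
  · subst h1; exact absurd h2 hij
  · ring
  · ring
  · ring

lemma v2_sum {m : ℕ} (i j : Fin m) (hij : i ≠ j) (a b : ℤ) :
    ∑ l, v2 i j a b l = a + b := by
  simp only [v2_split i j hij a b, Finset.sum_add_distrib,
    Finset.sum_ite_eq', Finset.mem_univ, if_true]

lemma v2_sumsq {m : ℕ} (i j : Fin m) (hij : i ≠ j) (a b : ℤ) :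
    ∑ l, v2 i j a b l * v2 i j a b l = a * a + b * b := by
  have h : ∀ l, v2 i j a b l * v2 i j a b l
      = (if l = i then a * a else 0) + (if l = j then b * b else 0) := by
    intro l
    unfold v2
    split_ifs with h1 h2
    · subst h1; exact absurd h2 hij
    · ring
    · ring
    · ring
  simp only [h, Finset.sum_add_distrib, Finset.sum_ite_eq', Finset.mem_univ, if_true]

lemma v2_comm {m : ℕ} (i j : Fin m) (hij : i ≠ j) (a b : ℤ) :
    v2 i j a b = v2 j i b a := by
  funext l
  unfold v2
  split_ifs with h1 h2
  · subst h1; exact absurd h2 hij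
  · rfl
  · rfl
  · rfl

lemma f_v2 {m : ℕ} (σ : Equiv.Perm (Fin m)) (ε : Fin m → ℤ)
    (f : (Fin m → ℤ) → (Fin m → ℤ))
    (hf : ∀ x j, f x j = ε (σ.symm j) * x (σ.symm j))
    (i j : Fin m) (hij : i ≠ j) (a b : ℤ) :
    f (v2 i j a b) = v2 (σ i) (σ j) (ε i * a) (ε j * b) := by
  funext l
  rw [hf]
  unfold v2
  by_cases h1 : l = σ i
  · subst h1
    simp
  · by_cases h2 : l = σ j
    · subst h2
      have hji' : σ j ≠ σ i := fun h => (Ne.symm hij) (σ.injective h)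
      simp [hji', Ne.symm hij]
    · have hi : σ.symm l ≠ i := fun h => h1 (by rw [← h, Equiv.apply_symm_apply])
      have hj : σ.symm l ≠ j := fun h => h2 (by rw [← h, Equiv.apply_symm_apply])
      simp [hi, hj, h1, h2]

lemma diff_A {m : ℕ} (i j k : Fin m) (hij : i ≠ j) (hjk : j ≠ k) (hik : i ≠ k)
    (b c : ℤ) : v2 j k b c - v2 i j 1 b = v2 i k (-1) c := by
  funext l
  simp only [Pi.sub_apply]
  by_cases h1 : l = i
  · subst h1
    simp [v2, hij, hik]
  · by_cases h2 : l = j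
    · subst h2
      simp [v2, Ne.symm hij, hjk, h1]
    · by_cases h3 : l = k
      · subst h3
        simp [v2, Ne.symm hik, Ne.symm hjk, h1, h2]
      · simp [v2, h1, h2, h3]

lemma mem_span {m : ℕ} (p : ℕ) (hodd : Odd p)
    (f : (Fin m → ℤ) → (Fin m → ℤ)) (β : Fin m → ℤ)
    (hβ : (2 : ℤ) ∣ ∑ i, β i) (k : ℕ)
    (hk : f^[k] β - β = (-2 : ℤ) • β) :
    β ∈ Submodule.span ℤ
      {x : Fin m → ℤ |
        (∃ a : Fin m → ℤ, ((2 : ℤ) ∣ ∑ i, a i) ∧ x = (p : ℤ) • a) ∨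
        (∃ k : ℕ, ∃ a : Fin m → ℤ, ((2 : ℤ) ∣ ∑ i, a i) ∧ x = f^[k] a - a)} := by
  obtain ⟨t, ht⟩ := hodd
  have h1 : (p : ℤ) • β ∈ Submodule.span ℤ
      {x : Fin m → ℤ |
        (∃ a : Fin m → ℤ, ((2 : ℤ) ∣ ∑ i, a i) ∧ x = (p : ℤ) • a) ∨
        (∃ k : ℕ, ∃ a : Fin m → ℤ, ((2 : ℤ) ∣ ∑ i, a i) ∧ x = f^[k] a - a)} :=
    Submodule.subset_span (Or.inl ⟨β, hβ, rfl⟩)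
  have h2 : f^[k] β - β ∈ Submodule.span ℤ
      {x : Fin m → ℤ |
        (∃ a : Fin m → ℤ, ((2 : ℤ) ∣ ∑ i, a i) ∧ x = (p : ℤ) • a) ∨
        (∃ k : ℕ, ∃ a : Fin m → ℤ, ((2 : ℤ) ∣ ∑ i, a i) ∧ x = f^[k] a - a)} :=
    Submodule.subset_span (Or.inr ⟨k, β, hβ, rfl⟩)
  have hpz : (p : ℤ) = 2 * t + 1 := by exact_mod_cast ht
  have key : β = (p : ℤ) • β + (t : ℤ) • (f^[k] β - β) := by
    rw [hk, hpz]
    funext l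
    simp only [Pi.add_apply, Pi.smul_apply, smul_eq_mul]
    ring
  rw [key]
  exact Submodule.add_mem _ h1 (Submodule.smul_mem _ _ h2)

end Stmt6Aux

open Stmt6Aux in
/-- Realize `D_m ⊂ ℤ^m` (`m ≥ 4`) as the integer vectors with even
coordinate sum, with roots the vectors of squared length `2`.  Let `p` be an odd prime and
`g` the signed permutation of `ℤ^m` given by `g(v_i) = ε_i v_{σ(i)}` (`σ ∈ S_m`,
`ε_i ∈ {±1}`); it preserves `D_m`.  If the sublattice generated by `p·D_m` and
`{g^k α − α : k, α ∈ D_m}` contains no roots, then `σ` is the identity and at most one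
index `i` has `ε i = −1`. -/
theorem stmt_6 (p : ℕ) (hp : p.Prime) (hodd : Odd p) (m : ℕ) (hm : 4 ≤ m)
    (σ : Equiv.Perm (Fin m)) (ε : Fin m → ℤ) (hε : ∀ i, ε i = 1 ∨ ε i = -1)
    (f : (Fin m → ℤ) → (Fin m → ℤ))
    (hf : ∀ x j, f x j = ε (σ.symm j) * x (σ.symm j))
    (hroot : ∀ x ∈ Submodule.span ℤ
      {x : Fin m → ℤ |
        (∃ a : Fin m → ℤ, ((2 : ℤ) ∣ ∑ i, a i) ∧ x = (p : ℤ) • a) ∨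
        (∃ k : ℕ, ∃ a : Fin m → ℤ, ((2 : ℤ) ∣ ∑ i, a i) ∧ x = f^[k] a - a)},
      (∑ i, x i * x i) ≠ 2) :
    σ = 1 ∧ ∀ i j : Fin m, ε i = -1 → ε j = -1 → i = j := by
  have hσ : ∀ i, σ i = i := by
    intro i
    by_contra hne
    set j := σ i with hj
    have hij : i ≠ j := fun h => hne h.symm
    by_cases hB : σ j = i
    · -- 2-cycle case
      by_cases hs : ε i * ε j = 1
      · -- equal signs: f β = -β with β = v2 i j 1 (-ε i)
        set β := v2 i j 1 (-ε i) with hβdef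
        have hβsum : (2 : ℤ) ∣ ∑ l, β l := by
          rw [hβdef, v2_sum i j hij]
          rcases hε i with h | h <;> rw [h] <;> norm_num
        have hfβ : f β = -β := by
          rw [hβdef, f_v2 σ ε f hf i j hij, ← hj, hB]
          have h2 : ε j * -ε i = -1 := by linear_combination -hs
          rw [h2, v2_comm j i (Ne.symm hij)]
          funext l
          simp only [Pi.neg_apply]
          unfold v2
          split_ifs <;> ring
        have hk : f^[1] β - β = (-2 : ℤ) • β := by
          rw [Function.iterate_one, hfβ]
          funext l
          simp only [Pi.sub_apply, Pi.neg_apply, Pi.smul_apply, smul_eq_mul]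
          ring
        have hmem := mem_span p hodd f β hβsum 1 hk
        have := hroot β hmem
        apply this
        rw [hβdef, v2_sumsq i j hij]
        rcases hε i with h | h <;> rw [h] <;> norm_num
      · -- opposite signs: f² β = -β with β = v2 i j 1 1
        have hs' : ε i * ε j = -1 := by
          rcases hε i with h | h <;> rcases hε j with h' | h' <;>
            rw [h, h'] at hs ⊢ <;> norm_num at hs <;> norm_num
        set β := v2 i j 1 1 with hβdef
        have hβsum : (2 : ℤ) ∣ ∑ l, β l := by
          rw [hβdef, v2_sum i j hij]; norm_num
        have hffβ : f (f β) = -β := by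
          rw [hβdef, f_v2 σ ε f hf i j hij, ← hj, hB,
            f_v2 σ ε f hf j i (Ne.symm hij), ← hj, hB]
          have e1 : ε j * (ε i * 1) = -1 := by rw [mul_one, mul_comm]; exact hs'
          have e2 : ε i * (ε j * 1) = -1 := by rw [mul_one]; exact hs'
          rw [e1, e2]
          funext l
          simp only [Pi.neg_apply]
          unfold v2
          split_ifs <;> ring
        have hk : f^[2] β - β = (-2 : ℤ) • β := by
          rw [show (2:ℕ) = 1 + 1 from rfl, Function.iterate_add_apply,
            Function.iterate_one, hffβ]
          funext l
          simp only [Pi.sub_apply, Pi.neg_apply, Pi.smul_apply, smul_eq_mul]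
          ring
        have hmem := mem_span p hodd f β hβsum 2 hk
        have := hroot β hmem
        apply this
        rw [hβdef, v2_sumsq i j hij]; norm_num
    · -- longer cycle: i, j, k := σ j pairwise distinct
      set k := σ j with hkdef
      have hjk : j ≠ k := by
        intro h
        apply hij
        apply σ.injective
        rw [← hj, ← hkdef]
        exact h
      have hik : i ≠ k := fun h => hB h.symm
      rcases hε i with h1 | h1
      · -- ε i = 1, β = v2 i j 1 1
        set β := v2 i j 1 1 with hβdef
        have hβsum : (2 : ℤ) ∣ ∑ l, β l := by
          rw [hβdef, v2_sum i j hij]; norm_num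
        have hx : f^[1] β - β = v2 i k (-1) (ε j) := by
          rw [Function.iterate_one, hβdef, f_v2 σ ε f hf i j hij, ← hj, ← hkdef,
            h1, one_mul, mul_one]
          exact diff_A i j k hij hjk hik 1 (ε j)
        have hmem : f^[1] β - β ∈ Submodule.span ℤ
            {x : Fin m → ℤ |
              (∃ a : Fin m → ℤ, ((2 : ℤ) ∣ ∑ i, a i) ∧ x = (p : ℤ) • a) ∨
              (∃ k : ℕ, ∃ a : Fin m → ℤ, ((2 : ℤ) ∣ ∑ i, a i) ∧ x = f^[k] a - a)} :=
          Submodule.subset_span (Or.inr ⟨1, β, hβsum, rfl⟩)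
        have := hroot _ hmem
        apply this
        rw [hx, v2_sumsq i k hik]
        rcases hε j with h | h <;> rw [h] <;> norm_num
      · -- ε i = -1, β = v2 i j 1 (-1)
        set β := v2 i j 1 (-1) with hβdef
        have hβsum : (2 : ℤ) ∣ ∑ l, β l := by
          rw [hβdef, v2_sum i j hij]; norm_num
        have hx : f^[1] β - β = v2 i k (-1) (-ε j) := by
          rw [Function.iterate_one, hβdef, f_v2 σ ε f hf i j hij, ← hj, ← hkdef, h1]
          have : (-1 : ℤ) * 1 = -1 := by ring
          rw [this]
          have : ε j * (-1 : ℤ) = -ε j := by ring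
          rw [this]
          exact diff_A i j k hij hjk hik (-1) (-ε j)
        have hmem : f^[1] β - β ∈ Submodule.span ℤ
            {x : Fin m → ℤ |
              (∃ a : Fin m → ℤ, ((2 : ℤ) ∣ ∑ i, a i) ∧ x = (p : ℤ) • a) ∨
              (∃ k : ℕ, ∃ a : Fin m → ℤ, ((2 : ℤ) ∣ ∑ i, a i) ∧ x = f^[k] a - a)} :=
          Submodule.subset_span (Or.inr ⟨1, β, hβsum, rfl⟩)
        have := hroot _ hmem
        apply this
        rw [hx, v2_sumsq i k hik]
        rcases hε j with h | h <;> rw [h] <;> norm_num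
  refine ⟨Equiv.ext hσ, ?_⟩
  intro i j hi hj
  by_contra hij
  set β := v2 i j 1 1 with hβdef
  have hβsum : (2 : ℤ) ∣ ∑ l, β l := by
    rw [hβdef, v2_sum i j hij]; norm_num
  have hfβ : f β = -β := by
    rw [hβdef, f_v2 σ ε f hf i j hij, hσ i, hσ j, hi, hj]
    funext l
    simp only [Pi.neg_apply]
    unfold v2
    split_ifs <;> ring
  have hk : f^[1] β - β = (-2 : ℤ) • β := by
    rw [Function.iterate_one, hfβ]
    funext l
    simp only [Pi.sub_apply, Pi.neg_apply, Pi.smul_apply, smul_eq_mul]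
    ring
  have hmem := mem_span p hodd f β hβsum 1 hk
  have := hroot β hmem
  apply this
  rw [hβdef, v2_sumsq i j hij]; norm_num
end

section
/- Let p be an odd prime with p ≥ 5 and m ≥ 5. There is no subgroup H of Aut(D_m) = S_m ⋉ (Z/2)^m acting on the root lattice D_m such that both: (i) the sublattice generated by p·D_m and {gα − α : g ∈ H, α ∈ D_m} contains no roots, and (ii) D_m has no nonzero H-invariant vector. The same conclusion holds for p = 3. -/
/-- Sum over `Fin m` of a function supported on two distinct points. -/
lemma sum_two_support {m : ℕ} (i j : Fin m) (h : i ≠ j) (f : Fin m → ℤ)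
    (hf : ∀ l, l ≠ i → l ≠ j → f l = 0) : ∑ l, f l = f i + f j := by
  rw [show f i + f j = ∑ l ∈ ({i, j} : Finset (Fin m)), f l from (Finset.sum_pair h).symm]
  exact (Finset.sum_subset (Finset.subset_univ _) (by
    intro x _ hx
    simp only [Finset.mem_insert, Finset.mem_singleton] at hx
    push_neg at hx
    exact hf x hx.1 hx.2)).symm

/-- Let `p` be an odd prime (`p ≥ 5`, or `p = 3`) and `m ≥ 5`.  There is
no subgroup `H` of `Aut(D_m) = S_m ⋉ (ℤ/2)^m` (all signed permutations of `ℤ^m`, acting on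
the root lattice `D_m` of integer vectors with even coordinate sum) such that both:
(i) the sublattice generated by `p·D_m` and `{gα − α : g ∈ H, α ∈ D_m}` contains no roots
(vectors of squared length `2`), and (ii) `D_m` has no nonzero `H`-invariant vector. -/
theorem stmt_8 (p : ℕ) (hp : p.Prime) (hodd : Odd p) (m : ℕ) (hm : 5 ≤ m)
    (H : Subgroup ((Fin m → ℤ) ≃ₗ[ℤ] (Fin m → ℤ)))
    (hsigned : ∀ g ∈ H, ∃ (σ : Equiv.Perm (Fin m)) (ε : Fin m → ℤ),
      (∀ i, ε i = 1 ∨ ε i = -1) ∧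
      ∀ (x : Fin m → ℤ) (j : Fin m), g x j = ε (σ.symm j) * x (σ.symm j))
    (hroot : ∀ x ∈ Submodule.span ℤ
      {x : Fin m → ℤ |
        (∃ a : Fin m → ℤ, ((2 : ℤ) ∣ ∑ i, a i) ∧ x = (p : ℤ) • a) ∨
        (∃ g ∈ H, ∃ a : Fin m → ℤ, ((2 : ℤ) ∣ ∑ i, a i) ∧ x = g a - a)},
      (∑ i, x i * x i) ≠ 2)
    (hinv : ∀ a : Fin m → ℤ, ((2 : ℤ) ∣ ∑ i, a i) → (∀ g ∈ H, g a = a) → a = 0) :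
    False := by
  obtain ⟨k, hk⟩ := hodd
  have hpz : (p : ℤ) = 2 * (k : ℤ) + 1 := by exact_mod_cast hk
  -- Key lemma: no `g a - a` can be `±2` times a root of `D_m`.
  have key : ∀ g ∈ H, ∀ w a : Fin m → ℤ, ((2 : ℤ) ∣ ∑ i, w i) → (∑ i, w i * w i) = 2 →
      ((2 : ℤ) ∣ ∑ i, a i) →
      ((⇑g a - a = (2 : ℤ) • w) ∨ (⇑g a - a = (-2 : ℤ) • w)) → False := by
    intro g hg w a hw hwn ha hd
    set S : Set (Fin m → ℤ) := {x : Fin m → ℤ |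
        (∃ a : Fin m → ℤ, ((2 : ℤ) ∣ ∑ i, a i) ∧ x = (p : ℤ) • a) ∨
        (∃ g ∈ H, ∃ a : Fin m → ℤ, ((2 : ℤ) ∣ ∑ i, a i) ∧ x = ⇑g a - a)} with hS
    refine hroot w ?_ hwn
    have h1 : (p : ℤ) • w ∈ Submodule.span ℤ S :=
      Submodule.subset_span (Or.inl ⟨w, hw, rfl⟩)
    have h2 : (⇑g a - a) ∈ Submodule.span ℤ S :=
      Submodule.subset_span (Or.inr ⟨g, hg, a, ha, rfl⟩)
    rcases hd with h | h
    · have hw_eq : w = (p : ℤ) • w - (k : ℤ) • (⇑g a - a) := by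
        rw [h, smul_smul]
        rw [show ((k : ℤ) * 2) • w = (2 * (k : ℤ)) • w by ring_nf]
        rw [← sub_smul, hpz]; ring_nf
      rw [hw_eq]
      exact Submodule.sub_mem _ h1 (Submodule.smul_mem _ _ h2)
    · have hw_eq : w = (p : ℤ) • w + (k : ℤ) • (⇑g a - a) := by
        rw [h, smul_smul]
        rw [show ((k : ℤ) * -2) • w = (-(2 * (k : ℤ))) • w by ring_nf]
        rw [← add_smul, hpz]; ring_nf
      rw [hw_eq]
      exact Submodule.add_mem _ h1 (Submodule.smul_mem _ _ h2)
  -- Step 1: every element of `H` acts diagonally.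
  have claim1 : ∀ g ∈ H, ∃ ε : Fin m → ℤ, (∀ i, ε i = 1 ∨ ε i = -1) ∧
      ∀ (x : Fin m → ℤ) (j : Fin m), ⇑g x j = ε j * x j := by
    intro g hg
    obtain ⟨σ, ε, hε, hact⟩ := hsigned g hg
    have hsym : ∀ j, σ.symm j = j := by
      intro j
      by_contra hne
      set i := σ.symm j with hi
      have hij : i ≠ j := hne
      -- a = 2 e_i
      set a : Fin m → ℤ := fun l => if l = i then 2 else 0 with ha_def
      set w : Fin m → ℤ := fun l => if l = j then ε i else if l = i then -1 else 0 with hw_def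
      have hεi : ε i = 1 ∨ ε i = -1 := hε i
      have hsi : σ.symm i ≠ i := by
        intro hcon
        exact hne (σ.symm.injective (by rw [hcon]))
      have hga : ⇑g a - a = (2 : ℤ) • w := by
        funext l
        simp only [Pi.sub_apply, Pi.smul_apply, smul_eq_mul, hact a l]; simp only [ha_def, hw_def]
        by_cases hlj : l = j
        · subst hlj
          rw [← hi]
          simp only [if_pos rfl, if_neg hij.symm, if_neg hij, if_true]
          ring
        · by_cases hli : l = i
          · subst hli
            simp only [if_neg hsi, if_pos rfl, if_neg hlj]
            norm_num
          · have : σ.symm l ≠ i := by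
              intro hcon
              apply hlj
              have := σ.symm.injective (hcon.trans hi)
              exact this
            simp only [if_neg this, if_neg hli, if_neg hlj]
            ring
      have hsw : ∑ l, w l = ε i + (-1) := by
        have := sum_two_support j i hij.symm w (by
          intro l hlj hli
          simp only [hw_def, if_neg hlj, if_neg hli])
        simpa [hw_def, if_neg hij.symm, if_neg hij] using this
      have hdw : (2 : ℤ) ∣ ∑ l, w l := by
        rw [hsw]; rcases hεi with h | h <;> rw [h] <;> decide
      have hnw : ∑ l, w l * w l = 2 := by
        have := sum_two_support j i hij.symm (fun l => w l * w l) (by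
          intro l hlj hli
          simp only [hw_def, if_neg hlj, if_neg hli, mul_zero])
        rw [this]
        simp only [hw_def, if_pos rfl, if_neg hij.symm, if_neg hij]
        rcases hεi with h | h <;> rw [h] <;> norm_num
      have hda : (2 : ℤ) ∣ ∑ l, a l := by
        have : ∑ l, a l = 2 := by
          have := sum_two_support i j hij a (by
            intro l hli _; simp only [ha_def, if_neg hli])
          rw [this]
          simp only [ha_def, if_pos rfl, if_neg hij.symm, add_zero]
        rw [this]
      exact key g hg w a hdw hnw hda (Or.inl hga)
    exact ⟨fun j => ε j, fun j => hε j, fun x l => by rw [hact x l, hsym l]⟩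
  -- Step 2: no element of `H` flips two distinct coordinates.
  have claim2 : ∀ g ∈ H, ∀ ε : Fin m → ℤ, (∀ (x : Fin m → ℤ) (l : Fin m), ⇑g x l = ε l * x l) →
      ∀ i j : Fin m, i ≠ j → ε i = -1 → ε j = -1 → False := by
    intro g hg ε hact i j hij hεi hεj
    set a : Fin m → ℤ := fun l => if l = i then 1 else if l = j then 1 else 0 with ha_def
    have hga : ⇑g a - a = (-2 : ℤ) • a := by
      funext l
      simp only [Pi.sub_apply, Pi.smul_apply, smul_eq_mul, hact a l]; simp only [ha_def]
      by_cases hli : l = i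
      · subst hli; simp only [if_pos rfl]; rw [hεi]; ring
      · by_cases hlj : l = j
        · subst hlj; simp only [if_neg hli, if_pos rfl]; rw [hεj]; ring
        · simp only [if_neg hli, if_neg hlj]; ring
    have hsa : ∑ l, a l = 2 := by
      have := sum_two_support i j hij a (by
        intro l hli hlj; simp only [ha_def, if_neg hli, if_neg hlj])
      rw [this]
      simp only [ha_def, if_pos rfl, if_neg hij.symm]
      norm_num
    have hna : ∑ l, a l * a l = 2 := by
      have := sum_two_support i j hij (fun l => a l * a l) (by
        intro l hli hlj; simp only [ha_def, if_neg hli, if_neg hlj, mul_zero])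
      rw [this]
      simp only [ha_def, if_pos rfl, if_neg hij.symm]
      norm_num
    exact key g hg a a (by rw [hsa]) hna (by rw [hsa]) (Or.inr hga)
  -- the basis-like vectors 2eᵢ
  set E : Fin m → (Fin m → ℤ) := fun i l => if l = i then 2 else 0 with hE_def
  by_cases hflip : ∃ g₀ ∈ H, ∃ i₀ : Fin m, ⇑g₀ (E i₀) ≠ E i₀
  · obtain ⟨g₀, hg₀, i₀, hne⟩ := hflip
    obtain ⟨ε₀, hε₀, hact₀⟩ := claim1 g₀ hg₀
    have hε₀i₀ : ε₀ i₀ = -1 := by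
      rcases hε₀ i₀ with h | h
      · exfalso
        apply hne
        funext l
        rw [hact₀]
        simp only [hE_def]
        by_cases hl : l = i₀
        · subst hl; rw [if_pos rfl, h]; ring
        · rw [if_neg hl]; ring
      · exact h
    have hε₀other : ∀ j, j ≠ i₀ → ε₀ j = 1 := by
      intro j hj
      rcases hε₀ j with h | h
      · exact h
      · exact absurd (claim2 g₀ hg₀ ε₀ hact₀ i₀ j (Ne.symm hj) hε₀i₀ h) id
    -- every g in H has ε = 1 away from i₀
    have hfix : ∀ g ∈ H, ∀ ε : Fin m → ℤ,
        (∀ (x : Fin m → ℤ) (l : Fin m), ⇑g x l = ε l * x l) →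
        ∀ j, j ≠ i₀ → ε j = 1 := by
      intro g hg ε hact j hj
      obtain ⟨εg, hεg, hactg⟩ := claim1 g hg
      have hεeq : ∀ l, ε l = εg l := by
        intro l
        have h1 := hact (E l) l
        have h2 := hactg (E l) l
        simp only [hE_def, if_pos rfl] at h1 h2
        omega
      rcases hεg j with h | h
      · rw [hεeq j, h]
      · -- g flips j; then also g flips only j, and g₀*g flips both i₀ and j
        exfalso
        have hεgi₀ : εg i₀ = 1 := by
          rcases hεg i₀ with h' | h'
          · exact h'
          · exact absurd (claim2 g hg εg hactg j i₀ hj h h') id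
        set gh : (Fin m → ℤ) ≃ₗ[ℤ] (Fin m → ℤ) := g₀ * g with hgh_def
        have hghH : gh ∈ H := mul_mem hg₀ hg
        obtain ⟨εh, hεh, hacth⟩ := claim1 gh hghH
        have hcomp : ∀ (x : Fin m → ℤ) (l : Fin m), ⇑gh x l = ε₀ l * (εg l * x l) := by
          intro x l
          show ⇑g₀ (⇑g x) l = _
          rw [hact₀, hactg]
        have hεhj : εh j = -1 := by
          have h1 := hacth (E j) j
          have h2 := hcomp (E j) j
          simp only [hE_def, if_pos rfl] at h1 h2
          rw [hε₀other j hj, h] at h2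
          omega
        have hεhi₀ : εh i₀ = -1 := by
          have h1 := hacth (E i₀) i₀
          have h2 := hcomp (E i₀) i₀
          simp only [hE_def, if_pos rfl] at h1 h2
          rw [hε₀i₀, hεgi₀] at h2
          omega
        exact claim2 gh hghH εh hacth i₀ j (Ne.symm hj) hεhi₀ hεhj
    -- invariant vector: a l = 2 for l ≠ i₀, 0 at i₀
    set a : Fin m → ℤ := fun l => if l = i₀ then 0 else 2 with ha_def
    have hainv : a = 0 := by
      apply hinv
      · apply Finset.dvd_sum
        intro l _
        simp only [ha_def]
        split <;> decide
      · intro g hg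
        obtain ⟨εg, hεg, hactg⟩ := claim1 g hg
        funext l
        rw [hactg]
        simp only [ha_def]
        by_cases hl : l = i₀
        · subst hl; rw [if_pos rfl]; ring
        · rw [if_neg hl, hfix g hg εg hactg l hl]; ring
    -- find l ≠ i₀
    have h01 : (⟨0, by omega⟩ : Fin m) ≠ (⟨1, by omega⟩ : Fin m) := by
      intro h; simp only [Fin.mk.injEq] at h
      omega
    by_cases h0 : (⟨0, by omega⟩ : Fin m) = i₀
    · have : a ⟨1, by omega⟩ = 0 := by rw [hainv]; rfl
      simp only [ha_def, if_neg (h0 ▸ h01.symm)] at this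
      exact absurd this (by decide)
    · have : a ⟨0, by omega⟩ = 0 := by rw [hainv]; rfl
      simp only [ha_def, if_neg h0] at this
      exact absurd this (by decide)
  · push_neg at hflip
    set i : Fin m := ⟨0, by omega⟩ with hi_def
    have hEi : E i = 0 := by
      apply hinv
      · have h01 : i ≠ (⟨1, by omega⟩ : Fin m) := by
          intro h; simp only [hi_def, Fin.mk.injEq] at h
          omega
        have := sum_two_support i ⟨1, by omega⟩ h01 (E i) (by
          intro l hli _; simp only [hE_def, if_neg hli])
        rw [this]
        simp only [hE_def, if_pos rfl, if_neg h01.symm]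
        norm_num
      · intro g hg
        exact hflip g hg i
    have : E i i = 0 := by rw [hEi]; rfl
    simp only [hE_def, if_pos rfl] at this
    exact absurd this (by decide)
end

section
/- Let p be an odd prime, A_{p−1} ⊂ Z^p as above, and let g ∈ S_p = W(A_{p−1}) be the p-cycle g(v_i) = v_{i+1} (indices mod p). Let T ⊂ A_{p−1} be the sublattice {Σ k_i α_i : p | Σ k_i}. Then T equals the sublattice generated by p·A_{p−1} and {g^k α − α : k ∈ Z, α ∈ A_{p−1}}, and the induced action of g on the discriminant group T^∨/T is nontrivial. -/
namespace Stmt14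

open scoped Fin.NatCast Fin.IntCast Fin.CommRing

/-- The root lattice `A_{p-1}`, realized inside `ℚ^p` as the integer vectors with
coordinate sum zero. -/
def Aset (p : ℕ) : Set (Fin p → ℚ) :=
  {x | (∀ i, ∃ n : ℤ, x i = (n : ℚ)) ∧ ∑ i, x i = 0}

/-- The sublattice `T = {Σ k_i α_i : Σ k_i ≡ 0 (mod p)}` of `A_{p-1}`. -/
def Tset (p : ℕ) : Set (Fin p → ℚ) :=
  {x | x ∈ Aset p ∧ ∃ c : ℤ, ∑ i, (i.val : ℚ) * x i = (p : ℚ) * (c : ℚ)}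

/-- The dual lattice `T^∨` inside the sum-zero hyperplane. -/
def Tdual (p : ℕ) : Set (Fin p → ℚ) :=
  {x | (∑ i, x i = 0) ∧ ∀ y ∈ Tset p, ∃ n : ℤ, ∑ i, x i * y i = (n : ℚ)}

/-- The `p`-cycle `g ∈ S_p = W(A_{p-1})` with `g(v_i) = v_{i+1}`, acting on `ℚ^p` by
permuting coordinates. -/
def gact (p : ℕ) : (Fin p → ℚ) → (Fin p → ℚ) :=
  fun x j => x ((finRotate p).symm j)


lemma gact_apply {p : ℕ} [NeZero p] (x : Fin p → ℚ) (j : Fin p) :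
    gact p x j = x (j - 1) := by
  obtain ⟨n, rfl⟩ := Nat.exists_eq_succ_of_ne_zero (NeZero.ne p)
  have h : (finRotate (n+1)).symm j = j - 1 := by
    rw [Equiv.symm_apply_eq, finRotate_succ_apply, sub_add_cancel]
  rw [gact, h]
lemma gact_iterate {p : ℕ} [NeZero p] (k : ℕ) (x : Fin p → ℚ) (j : Fin p) :
    (gact p)^[k] x j = x (j - (k : Fin p)) := by
  induction k generalizing j with
  | zero => simp
  | succ k ih =>
    rw [Function.iterate_succ_apply', gact_apply, ih]
    congr 1; push_cast; ring

def TMod (p : ℕ) : Submodule ℤ (Fin p → ℚ) where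
  carrier := Tset p
  zero_mem' := ⟨⟨fun i => ⟨0, by simp⟩, by simp⟩, 0, by simp⟩
  add_mem' := by
    rintro x y ⟨⟨hxint, hxsum⟩, cx, hcx⟩ ⟨⟨hyint, hysum⟩, cy, hcy⟩
    refine ⟨⟨fun i => ?_, ?_⟩, cx + cy, ?_⟩
    · obtain ⟨a, ha⟩ := hxint i; obtain ⟨b, hb⟩ := hyint i
      exact ⟨a + b, by simp [ha, hb]⟩
    · simp [Finset.sum_add_distrib, hxsum, hysum]
    · simp only [Pi.add_apply, mul_add, Finset.sum_add_distrib, hcx, hcy]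
      push_cast; ring
  smul_mem' := by
    rintro z x ⟨⟨hxint, hxsum⟩, cx, hcx⟩
    refine ⟨⟨fun i => ?_, ?_⟩, z * cx, ?_⟩
    · obtain ⟨a, ha⟩ := hxint i
      exact ⟨z * a, by simp [zsmul_eq_mul, ha]⟩
    · simp [zsmul_eq_mul, ← Finset.mul_sum, hxsum]
    · simp only [Pi.smul_apply, zsmul_eq_mul]
      have h : ∑ i : Fin p, (i.val:ℚ) * ((z:ℚ) * x i) = (z:ℚ) * ∑ i : Fin p, (i.val:ℚ) * x i := by
        rw [Finset.mul_sum]; exact Finset.sum_congr rfl fun i _ => by ring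
      rw [h, hcx]; push_cast; ring

lemma pA_mem_Tset {p : ℕ} {a : Fin p → ℚ} (ha : a ∈ Aset p) :
    (p:ℚ) • a ∈ Tset p := by
  obtain ⟨hint, hsum⟩ := ha
  choose n hn using hint
  refine ⟨⟨fun i => ⟨p * n i, by simp [hn]⟩, ?_⟩, ∑ i, (i.val:ℤ) * n i, ?_⟩
  · simp [← Finset.mul_sum, hsum]
  · simp only [Pi.smul_apply, smul_eq_mul, hn]
    push_cast
    rw [Finset.mul_sum]
    exact Finset.sum_congr rfl fun i _ => by ring

lemma shift_mem_Tset {p : ℕ} (hp0 : p ≠ 0) {a : Fin p → ℚ} (ha : a ∈ Aset p) (k : ℕ) :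
    (gact p)^[k] a - a ∈ Tset p := by
  haveI : NeZero p := ⟨hp0⟩
  obtain ⟨hint, hsum⟩ := ha
  choose n hn using hint
  set κ : Fin p := (k : Fin p) with hκ
  have hit : ∀ j, (gact p)^[k] a j = a (j - κ) := fun j => gact_iterate k a j
  have hnsum : ∑ i, n i = 0 := by
    have h : ((∑ i, n i : ℤ) : ℚ) = 0 := by push_cast; simp only [← hn]; exact hsum
    exact_mod_cast h
  set S : ℤ := ∑ i : Fin p, (((i + κ).val : ℤ) - (i.val : ℤ)) * n i with hS
  have hdvd : (p:ℤ) ∣ S := by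
    rw [← ZMod.intCast_zmod_eq_zero_iff_dvd]
    rw [hS]
    push_cast
    have key : ∀ i : Fin p, (((i + κ).val : ZMod p) - ((i.val : ℕ) : ZMod p)) * ((n i : ℤ) : ZMod p)
        = ((κ.val : ℕ) : ZMod p) * ((n i : ℤ) : ZMod p) := by
      intro i
      rw [Fin.val_add, ZMod.natCast_mod]
      push_cast
      ring
    rw [Finset.sum_congr rfl fun i _ => key i, ← Finset.mul_sum]
    have h : ∑ i : Fin p, ((n i : ℤ) : ZMod p) = 0 := by
      have := congrArg (fun z : ℤ => (z : ZMod p)) hnsum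
      push_cast at this
      simpa using this
    rw [h, mul_zero]
  obtain ⟨c, hc⟩ := hdvd
  refine ⟨⟨fun j => ⟨n (j - κ) - n j, by simp [hit, hn]⟩, ?_⟩, c, ?_⟩
  · simp only [Pi.sub_apply, hit]
    rw [Finset.sum_sub_distrib]
    have hre : ∑ j : Fin p, a (j - κ) = ∑ j : Fin p, a j :=
      Fintype.sum_equiv (Equiv.subRight κ) _ _ (fun j => rfl)
    rw [hre, sub_self]
  · have hre2 : ∑ i : Fin p, (((i+κ).val : ℕ):ℚ) * (n i : ℚ) = ∑ j : Fin p, (j.val:ℚ) * (n (j - κ) : ℚ) :=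
      Fintype.sum_equiv (Equiv.addRight κ) _ _ (fun i => by
        simp [Equiv.coe_addRight, add_sub_cancel_right])
    have hLHS : ∑ j : Fin p, (j.val:ℚ) * (((gact p)^[k] a - a) j) = (S : ℚ) := by
      simp only [Pi.sub_apply, hit, hn]
      rw [hS]
      push_cast
      have l1 : ∑ x : Fin p, ((x.val:ℚ)) * ((n (x - κ):ℚ) - (n x:ℚ))
          = ∑ x : Fin p, ((x.val:ℚ) * (n (x-κ):ℚ)) - ∑ x : Fin p, ((x.val:ℚ) * (n x:ℚ)) := by
        rw [← Finset.sum_sub_distrib]; exact Finset.sum_congr rfl fun i _ => by ring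
      have l2 : ∑ x : Fin p, (((x+κ).val:ℚ) - (x.val:ℚ)) * (n x:ℚ)
          = ∑ x : Fin p, (((x+κ).val:ℚ) * (n x:ℚ)) - ∑ x : Fin p, ((x.val:ℚ) * (n x:ℚ)) := by
        rw [← Finset.sum_sub_distrib]; exact Finset.sum_congr rfl fun i _ => by ring
      rw [l1, l2, hre2]
    rw [hLHS, hc]
    push_cast
    ring

lemma val_one_eq {p : ℕ} [NeZero p] (hp2 : 2 ≤ p) : ((1 : Fin p) : ℕ) = 1 := by
  haveI : NeZero p := ⟨by omega⟩
  rw [Fin.val_one']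
  exact Nat.mod_eq_of_lt (by omega)

lemma zero_ne_one' {p : ℕ} [NeZero p] (hp2 : 2 ≤ p) : (0 : Fin p) ≠ 1 := by
  haveI : NeZero p := ⟨by omega⟩
  intro h
  have := congrArg Fin.val h
  rw [val_one_eq hp2] at this
  simp at this

lemma coe_neg_one' {p : ℕ} [NeZero p] (hp : p ≠ 0) : ((-1 : Fin p) : ℕ) = p - 1 := by
  obtain ⟨q, rfl⟩ := Nat.exists_eq_succ_of_ne_zero hp
  rw [Fin.coe_neg_one]
  omega

lemma coe_sub_one' {p : ℕ} [NeZero p] {j : Fin p} (hj : j ≠ 0) : ((j - 1 : Fin p) : ℕ) = j.val - 1 := by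
  have hp : p ≠ 0 := by rintro rfl; exact j.elim0
  obtain ⟨q, rfl⟩ := Nat.exists_eq_succ_of_ne_zero hp
  rw [Fin.coe_sub_one]
  rw [if_neg hj]

lemma Iic_neg_one {p : ℕ} [NeZero p] (hp : p ≠ 0) : Finset.Iic (-1 : Fin p) = Finset.univ := by
  haveI : NeZero p := ⟨hp⟩
  ext i
  simp only [Finset.mem_Iic, Finset.mem_univ, iff_true, Fin.le_def, coe_neg_one' hp]
  have := i.isLt
  omega

lemma Iic_erase {p : ℕ} [NeZero p] {j : Fin p} (hj : j ≠ 0) :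
    (Finset.Iic j).erase j = Finset.Iic (j - 1) := by
  haveI : NeZero p := ‹_›
  have hjv : j.val ≠ 0 := by intro h; exact hj (Fin.ext (by rw [h, Fin.val_zero]))
  ext i
  simp only [Finset.mem_erase, Finset.mem_Iic, Fin.le_def, coe_sub_one' hj, ne_eq,
    Fin.ext_iff]
  omega

lemma Tset_subset_span {p : ℕ} (hp2 : 2 ≤ p) :
    Tset p ⊆ (Submodule.span ℤ
      {x : Fin p → ℚ | (∃ a ∈ Aset p, x = (p : ℚ) • a) ∨
        (∃ k : ℕ, ∃ a ∈ Aset p, x = (gact p)^[k] a - a)} : Submodule ℤ (Fin p → ℚ)) := by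
  haveI : NeZero p := ⟨by omega⟩
  intro x hx
  obtain ⟨⟨hint, hsum⟩, c, hc⟩ := hx
  choose n hn using hint
  have h01 : (0 : Fin p) ≠ 1 := zero_ne_one' hp2
  set d : Fin p → ℚ := fun t => if t = 0 then 1 else if t = 1 then -1 else 0 with hd
  have hdsplit : ∀ t : Fin p, d t = (if t = 0 then (1:ℚ) else 0) + (if t = 1 then (-1:ℚ) else 0) := by
    intro t
    simp only [hd]
    by_cases ht0 : t = 0
    · subst ht0; rw [if_pos rfl, if_pos rfl, if_neg h01, add_zero]
    · rw [if_neg ht0, if_neg ht0, zero_add]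
  have hdA : d ∈ Aset p := by
    constructor
    · intro i
      refine ⟨if i = 0 then 1 else if i = 1 then -1 else 0, ?_⟩
      simp only [hd]; split_ifs <;> simp
    · simp only [hdsplit]
      rw [Finset.sum_add_distrib]
      simp
  have hnsum : ∑ i, n i = 0 := by
    have h : ((∑ i, n i : ℤ) : ℚ) = 0 := by push_cast; simp only [← hn]; exact hsum
    exact_mod_cast h
  have hcval : ∑ i : Fin p, (i.val:ℤ) * n i = p * c := by
    have h : ((∑ i : Fin p, (i.val:ℤ) * n i : ℤ) : ℚ) = ((p * c : ℤ) : ℚ) := by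
      push_cast
      simp only [← hn]
      exact hc
    exact_mod_cast h
  set m : Fin p → ℤ := fun k => ∑ i ∈ Finset.Iic k, n i with hm
  have hmtop : m (-1) = 0 := by
    simp only [hm]
    rw [Iic_neg_one (by omega)]
    exact hnsum
  have hstep : ∀ j : Fin p, m j - m (j - 1) = n j := by
    intro j
    by_cases hj : j = 0
    · subst hj
      rw [zero_sub, hmtop, sub_zero]
      simp only [hm]
      have h0 : Finset.Iic (0 : Fin p) = {0} := by
        ext i; simp [Fin.le_zero_iff]
      rw [h0, Finset.sum_singleton]
    · have h := Finset.sum_erase_add (Finset.Iic j) n (Finset.mem_Iic.mpr le_rfl)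
      rw [Iic_erase hj] at h
      simp only [hm]
      omega
  -- total sum of partial sums
  have hIic : ∀ k : Fin p, Finset.Iic k = Finset.univ.filter (· ≤ k) := fun k => by ext i; simp
  have hIci : ∀ i : Fin p, Finset.univ.filter (fun k => i ≤ k) = Finset.Ici i := fun i => by
    ext k; simp
  have hswap : ∑ k, m k = ∑ i : Fin p, ((p - i.val : ℕ) : ℤ) * n i := by
    simp only [hm, hIic, Finset.sum_filter]
    rw [Finset.sum_comm]
    refine Finset.sum_congr rfl fun i _ => ?_
    rw [← Finset.sum_filter, Finset.sum_const, hIci, Fin.card_Ici, nsmul_eq_mul]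
  have hssum : (∑ k, m k : ℤ) = -(p * c) := by
    rw [hswap]
    have hterm : ∀ i : Fin p, ((p - i.val : ℕ) : ℤ) * n i = (p:ℤ) * n i - (i.val:ℤ) * n i := by
      intro i
      rw [Nat.cast_sub (le_of_lt i.isLt)]
      ring
    rw [Finset.sum_congr rfl fun i _ => hterm i, Finset.sum_sub_distrib, ← Finset.mul_sum,
      hnsum, hcval]
    ring
  -- the decomposition
  have hdecomp : x = (∑ k : Fin p, m k • ((gact p)^[k.val] d - d)) + (-c) • ((p:ℚ) • d) := by
    funext j
    simp only [Finset.sum_apply, Pi.add_apply, Pi.smul_apply, Pi.sub_apply, smul_eq_mul,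
      zsmul_eq_mul]
    have hitd : ∀ k : Fin p, (gact p)^[k.val] d j = d (j - k) := by
      intro k
      rw [gact_iterate, Fin.cast_val_eq_self]
    have e0 : ∀ k : Fin p, ((j - k = 0) : Prop) = ((k = j) : Prop) := by
      intro k
      simp only [eq_iff_iff, sub_eq_zero]
      exact ⟨fun h => h.symm, fun h => h.symm⟩
    have e1 : ∀ k : Fin p, ((j - k = 1) : Prop) = ((k = j - 1) : Prop) := by
      intro k
      simp only [eq_iff_iff]
      constructor
      · intro h; linear_combination -h
      · intro h; linear_combination -h
    calc x j = (n j : ℚ) := hn j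
      _ = ((m j : ℚ) - m (j - 1)) - ((∑ k, m k : ℤ) : ℚ) * d j + (-(c:ℚ)) * ((p:ℚ) * d j) := by
          rw [hssum, ← hstep j]
          push_cast
          ring
      _ = ∑ k : Fin p, (m k : ℚ) * ((gact p)^[(k:ℕ)] d j - d j) + (-(c:ℚ)) * ((p:ℚ) * d j) := by
          congr 1
          have expand : ∑ k : Fin p, (m k : ℚ) * ((gact p)^[(k:ℕ)] d j - d j)
              = ∑ k : Fin p, ((m k : ℚ) * d (j - k)) - ∑ k : Fin p, (m k : ℚ) * d j := by
            rw [← Finset.sum_sub_distrib]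
            exact Finset.sum_congr rfl fun k _ => by rw [hitd k]; ring
          rw [expand]
          have hsecond : ∑ k : Fin p, (m k : ℚ) * d j = ((∑ k, m k : ℤ) : ℚ) * d j := by
            rw [← Finset.sum_mul]
            push_cast
            ring
          have hfirst : ∑ k : Fin p, (m k : ℚ) * d (j - k) = (m j : ℚ) - (m (j-1) : ℚ) := by
            have : ∀ k : Fin p, (m k : ℚ) * d (j - k)
                = (if k = j then (m k : ℚ) else 0) + (if k = j - 1 then -(m k : ℚ) else 0) := by
              intro k
              rw [hdsplit (j - k)]
              simp only [e0, e1]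
              split_ifs <;> ring
            rw [Finset.sum_congr rfl fun k _ => this k, Finset.sum_add_distrib]
            simp only [Finset.sum_ite_eq', Finset.mem_univ, if_true, Finset.sum_neg_distrib]
            try ring
          rw [hfirst, hsecond]
  rw [hdecomp]
  refine Submodule.add_mem _ (Submodule.sum_mem _ fun k _ => Submodule.smul_mem _ _
      (Submodule.subset_span (Or.inr ⟨k.val, d, hdA, rfl⟩)))
    (Submodule.smul_mem _ _ (Submodule.subset_span (Or.inl ⟨d, hdA, rfl⟩)))

/-- For the `p`-cycle `g`, the sublattice generated by `p·A_{p−1}` and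
`{g^k α − α : k ∈ ℕ, α ∈ A_{p−1}}` equals `T`, and the induced action of `g` on the
discriminant group `T^∨/T` is nontrivial. -/
theorem stmt_14 (p : ℕ) (hp : p.Prime) (hodd : Odd p) :
    ((Submodule.span ℤ
      {x : Fin p → ℚ | (∃ a ∈ Aset p, x = (p : ℚ) • a) ∨
        (∃ k : ℕ, ∃ a ∈ Aset p, x = (gact p)^[k] a - a)} : Submodule ℤ (Fin p → ℚ)) :
        Set (Fin p → ℚ)) = Tset p ∧
    ∃ x ∈ Tdual p, gact p x - x ∉ Tset p := by
  have hp2 : 2 ≤ p := hp.two_le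
  haveI : NeZero p := ⟨by omega⟩
  have hpQ : (p:ℚ) ≠ 0 := by positivity
  constructor
  · apply Set.Subset.antisymm
    · intro z hz
      have hle : Submodule.span ℤ
          {x : Fin p → ℚ | (∃ a ∈ Aset p, x = (p : ℚ) • a) ∨
            (∃ k : ℕ, ∃ a ∈ Aset p, x = (gact p)^[k] a - a)} ≤ TMod p := by
        rw [Submodule.span_le]
        rintro w (⟨a, ha, rfl⟩ | ⟨k, a, ha, rfl⟩)
        · exact pA_mem_Tset ha
        · exact shift_mem_Tset (by omega) ha k
      exact hle hz
    · exact Tset_subset_span hp2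
  · set x₀ : Fin p → ℚ := fun j => (2 * (j.val:ℚ) + 1 - p) / (2 * p) with hx₀
    have hgauss : (∑ j : Fin p, (j.val:ℚ)) * 2 = (p:ℚ) * ((p:ℚ) - 1) := by
      rw [Fin.sum_univ_eq_sum_range (fun i => ((i:ℕ):ℚ)) p]
      have h := congrArg (fun t : ℕ => (t:ℚ)) (Finset.sum_range_id_mul_two p)
      push_cast [Nat.cast_sub (by omega : 1 ≤ p)] at h
      exact h
    refine ⟨x₀, ⟨?_, ?_⟩, ?_⟩
    · -- sum zero
      simp only [hx₀]
      rw [← Finset.sum_div]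
      have hnum : ∑ j : Fin p, (2 * (j.val:ℚ) + 1 - (p:ℚ)) = 0 := by
        rw [Finset.sum_sub_distrib, Finset.sum_add_distrib, ← Finset.mul_sum]
        simp only [Finset.sum_const, Finset.card_univ, Fintype.card_fin, nsmul_eq_mul, mul_one]
        nlinarith [hgauss]
      rw [hnum, zero_div]
    · -- integral pairing with Tset
      rintro y ⟨⟨hyint, hysum⟩, c, hcy⟩
      refine ⟨c, ?_⟩
      simp only [hx₀]
      have hdiv : ∑ i : Fin p, (2 * (i.val:ℚ) + 1 - p) / (2*p) * y i
          = (∑ i : Fin p, (2 * (i.val:ℚ) + 1 - p) * y i) / (2*p) := by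
        rw [Finset.sum_div]
        exact Finset.sum_congr rfl fun i _ => (div_mul_eq_mul_div _ _ _)
      rw [hdiv]
      have expand : ∑ i : Fin p, (2 * (i.val:ℚ) + 1 - p) * y i
          = 2 * (∑ i : Fin p, (i.val:ℚ) * y i) + (1 - p) * ∑ i : Fin p, y i := by
        rw [Finset.mul_sum, Finset.mul_sum, ← Finset.sum_add_distrib]
        exact Finset.sum_congr rfl fun i _ => by ring
      rw [expand, hcy, hysum]
      field_simp
      ring
    · -- nontriviality
      rintro ⟨⟨hint, -⟩, -⟩
      obtain ⟨n, hn⟩ := hint 1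
      have h1v : ((1:Fin p):ℕ) = 1 := val_one_eq hp2
      have hval : (gact p x₀ - x₀) 1 = -(1/p) := by
        rw [Pi.sub_apply, gact_apply, sub_self]
        simp only [hx₀, Fin.val_zero, h1v]
        push_cast
        field_simp
        try ring
      rw [hval] at hn
      have hQ : (p:ℚ) * n = -1 := by
        field_simp at hn
        linarith
      have hZ : (p:ℤ) * n = -1 := by exact_mod_cast hQ
      have hdvd : (p:ℤ) ∣ 1 := ⟨-n, by linarith⟩
      have hle := Int.le_of_dvd one_pos hdvd
      have : (2:ℤ) ≤ (p:ℤ) := by exact_mod_cast hp2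
      linarith

end Stmt14
end
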